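/- arXiv:1507.07455 — 2 statements merged into one kernel-verified Lean document; each statement's English description precedes it below -/
import Mathlib

section
/- Let w : (0,∞) → (0,∞) be continuous, decreasing, with w(y) = 1 for y > 1, and satisfying the doubling condition w(y) ≤ D·w(2y) for all y > 0 and some constant D > 0. Then for every θ ∈ (0,1], the integral ∫_θ^1 (w(y)/y) d(1/w(y)) is at most (2 log D)/θ. -/
/-!
Writing `g = 1 / w`, the integrand is `(1 / y) · dg / g`, and `dg / g = d(log g)` because `g` is
continuous. On a dyadic block `[2ᵏθ, 2ᵏ⁺¹θ]` the factor `1 / y` is at most `1 / (2ᵏθ)`, while the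
increment of `log g = -log w` is at most `log D` by doubling; summing the geometric series over the
blocks covering `(θ, 1]` gives `2 log D / θ`.
-/

open MeasureTheory Set Filter Topology

lemma sub_div_le_mul_log_sub_log {u v δ : ℝ} (hu : 0 < u) (huv : u ≤ v) (hvu : v ≤ (1 + δ) * u) :
    (v - u) / u ≤ (1 + δ) * (Real.log v - Real.log u) := by
  have hv : 0 < v := hu.trans_le huv
  have hx : 1 ≤ v / u := (one_le_div hu).2 huv
  have hδ : 0 ≤ 1 + δ := by nlinarith
  calc (v - u) / u = v / u * (1 - (v / u)⁻¹) := by field_simp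
    _ ≤ (1 + δ) * Real.log (v / u) :=
        mul_le_mul ((div_le_iff₀ hu).2 hvu) (Real.one_sub_inv_le_log_of_pos (by positivity))
          (by simpa using inv_le_one_of_one_le₀ hx) hδ
    _ = (1 + δ) * (Real.log v - Real.log u) := by rw [Real.log_div hv.ne' hu.ne']

namespace StieltjesFunction

variable (g : StieltjesFunction ℝ) {a b : ℝ}

lemma intervalIntegrable_of_bounded {φ : ℝ → ℝ} (hφ : Measurable φ) (hab : a ≤ b) {M : ℝ}
    (hM : ∀ y ∈ Ioc a b, ‖φ y‖ ≤ M) : IntervalIntegrable φ g.measure a b :=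
  (intervalIntegrable_iff_integrableOn_Ioc_of_le hab).2 <|
    Measure.integrableOn_of_bounded measure_Ioc_lt_top.ne hφ.aestronglyMeasurable
      (ae_restrict_of_forall_mem measurableSet_Ioc hM)

lemma inv_le_inv_of_mem_Ioc (ha : 0 < g a) {y : ℝ} (hy : y ∈ Ioc a b) :
    (g y)⁻¹ ≤ (g a)⁻¹ :=
  inv_anti₀ ha (g.mono hy.1.le)

lemma intervalIntegrable_inv (hab : a ≤ b) (ha : 0 < g a) :
    IntervalIntegrable (fun y => (g y)⁻¹) g.measure a b :=
  g.intervalIntegrable_of_bounded g.mono.measurable.inv hab fun y hy => by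
    rw [Real.norm_of_nonneg (inv_nonneg.2 (ha.trans_le (g.mono hy.1.le)).le)]
    exact g.inv_le_inv_of_mem_Ioc ha hy

lemma intervalIntegrable_inv_div (hab : a ≤ b) (ha0 : 0 < a) (ha : 0 < g a) :
    IntervalIntegrable (fun y => (g y)⁻¹ / y) g.measure a b :=
  g.intervalIntegrable_of_bounded (g.mono.measurable.inv.div measurable_id) hab fun y hy => by
    have hy0 : 0 < y := ha0.trans hy.1
    rw [Real.norm_of_nonneg (div_nonneg (inv_nonneg.2 (ha.trans_le (g.mono hy.1.le)).le) hy0.le)]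
    exact div_le_div₀ (inv_nonneg.2 ha.le) (g.inv_le_inv_of_mem_Ioc ha hy) ha0 hy.1.le

lemma integral_inv_le (hab : a ≤ b) (ha : 0 < g a) :
    ∫ y in a..b, (g y)⁻¹ ∂g.measure ≤ (g b - g a) / g a := by
  rw [intervalIntegral.integral_of_le hab]
  calc ∫ y in Ioc a b, (g y)⁻¹ ∂g.measure ≤ ∫ _ in Ioc a b, (g a)⁻¹ ∂g.measure :=
        setIntegral_mono_on (g.intervalIntegrable_inv hab ha).1
          (integrableOn_const measure_Ioc_lt_top.ne) measurableSet_Ioc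
          fun _ hy => g.inv_le_inv_of_mem_Ioc ha hy
    _ = (g b - g a) / g a := by
        rw [setIntegral_const, measureReal_def, measure_Ioc,
          ENNReal.toReal_ofReal (sub_nonneg.2 (g.mono hab)), smul_eq_mul, div_eq_mul_inv]

/-- Compare with Riemann–Stieltjes sums over partitions fine enough that `g` varies by a factor at
most `1 + δ` on each piece, then let `δ → 0`. -/
lemma integral_inv_le_log_sub_log (hab : a ≤ b) (ha : 0 < g a) (hcont : ContinuousOn g (Icc a b)) :
    ∫ y in a..b, (g y)⁻¹ ∂g.measure ≤ Real.log (g b) - Real.log (g a) := by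
  set L := Real.log (g b) - Real.log (g a)
  suffices h : ∀ δ > 0, ∫ y in a..b, (g y)⁻¹ ∂g.measure ≤ (1 + δ) * L by
    refine ge_of_tendsto (x := 𝓝[>] 0) ?_ (eventually_nhdsWithin_of_forall h)
    exact tendsto_nhdsWithin_of_tendsto_nhds
      (((continuous_const.add continuous_id).mul continuous_const).tendsto' 0 L (by simp [L]))
  intro δ hδ
  obtain ⟨ρ, hρ, hg_unif⟩ := Metric.uniformContinuousOn_iff_le.1
    (isCompact_Icc.uniformContinuousOn_of_continuous hcont) (δ * g a) (by positivity)
  obtain ⟨n, hn⟩ := exists_nat_gt ((b - a) / ρ)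
  have hn0 : (0 : ℝ) < n := lt_of_le_of_lt (div_nonneg (sub_nonneg.2 hab) hρ.le) hn
  set h := (b - a) / n
  have hh : 0 ≤ h := div_nonneg (sub_nonneg.2 hab) hn0.le
  have hhρ : h ≤ ρ := (div_le_iff₀ hn0).2 (by linarith [(div_lt_iff₀ hρ).1 hn])
  set t : ℕ → ℝ := fun i => a + i * h
  have ht0 : t 0 = a := by simp [t]
  have htn : t n = b := by simp only [t, h]; field_simp; ring
  have ht_succ : ∀ i, t (i + 1) = t i + h := fun i => by simp only [t, Nat.cast_succ]; ring
  have ht_mem : ∀ i ≤ n, t i ∈ Icc a b := fun i hi =>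
    ⟨le_add_of_nonneg_right (by positivity), htn ▸ by
      simp only [t]; gcongr⟩
  have hgt : ∀ i, 0 < g (t i) := fun i =>
    ha.trans_le (g.mono (by simp only [t]; linarith [mul_nonneg i.cast_nonneg hh]))
  have hratio : ∀ i < n, g (t (i + 1)) ≤ (1 + δ) * g (t i) := fun i hi => by
    have hdist := hg_unif _ (ht_mem (i + 1) hi) _ (ht_mem i hi.le)
      (by rw [ht_succ, Real.dist_eq, add_sub_cancel_left, abs_of_nonneg hh]; exact hhρ)
    rw [Real.dist_eq] at hdist
    have hga : g a ≤ g (t i) := g.mono (ht_mem i hi.le).1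
    nlinarith [le_abs_self (g (t (i + 1)) - g (t i))]
  have ht_mono : ∀ i, t i ≤ t (i + 1) := fun i => by rw [ht_succ]; linarith
  rw [← ht0, ← htn, ← intervalIntegral.sum_integral_adjacent_intervals fun i _ =>
    g.intervalIntegrable_inv (ht_mono i) (hgt i)]
  calc ∑ i ∈ Finset.range n, ∫ y in t i..t (i + 1), (g y)⁻¹ ∂g.measure
      ≤ ∑ i ∈ Finset.range n, (g (t (i + 1)) - g (t i)) / g (t i) :=
        Finset.sum_le_sum fun i _ => g.integral_inv_le (ht_mono i) (hgt i)
    _ ≤ ∑ i ∈ Finset.range n, (1 + δ) * (Real.log (g (t (i + 1))) - Real.log (g (t i))) :=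
        Finset.sum_le_sum fun i hi => sub_div_le_mul_log_sub_log (hgt i) (g.mono (ht_mono i))
          (hratio i (Finset.mem_range.1 hi))
    _ = (1 + δ) * L := by
        rw [← Finset.mul_sum, Finset.sum_range_sub (fun i => Real.log (g (t i))), ht0, htn]

lemma integral_inv_div_le (ha0 : 0 < a) (hab : a ≤ b) (ha : 0 < g a)
    (hcont : ContinuousOn g (Icc a b)) :
    ∫ y in a..b, (g y)⁻¹ / y ∂g.measure ≤ (Real.log (g b) - Real.log (g a)) / a := by
  rw [intervalIntegral.integral_of_le hab]
  calc ∫ y in Ioc a b, (g y)⁻¹ / y ∂g.measure ≤ ∫ y in Ioc a b, (g y)⁻¹ / a ∂g.measure :=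
        setIntegral_mono_on (g.intervalIntegrable_inv_div hab ha0 ha).1
          ((g.intervalIntegrable_inv hab ha).1.div_const a) measurableSet_Ioc fun y hy =>
            div_le_div_of_nonneg_left (inv_nonneg.2 (ha.trans_le (g.mono hy.1.le)).le) ha0 hy.1.le
    _ = (∫ y in a..b, (g y)⁻¹ ∂g.measure) / a := by
        rw [integral_div, intervalIntegral.integral_of_le hab]
    _ ≤ (Real.log (g b) - Real.log (g a)) / a :=
        div_le_div_of_nonneg_right (g.integral_inv_le_log_sub_log hab ha hcont) ha0.le

lemma integral_inv_div_le_of_doubling {D θ : ℝ} (hθ : 0 < θ) (hpos : ∀ y, 0 < y → 0 < g y)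
    (hcont : ContinuousOn g (Ioi 0)) (hdoub : ∀ y, 0 < y → g (2 * y) ≤ D * g y) (m : ℕ) :
    ∫ y in θ..2 ^ m * θ, (g y)⁻¹ / y ∂g.measure ≤ 2 * Real.log D / θ := by
  have hlog_doub : ∀ y, 0 < y → Real.log (g (2 * y)) - Real.log (g y) ≤ Real.log D := fun y hy => by
    rw [← Real.log_div (hpos _ (by positivity)).ne' (hpos y hy).ne']
    exact Real.log_le_log (div_pos (hpos _ (by positivity)) (hpos y hy))
      ((div_le_iff₀ (hpos y hy)).2 (hdoub y hy))
  have hlogD : 0 ≤ Real.log D := by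
    have := Real.log_le_log (hpos θ hθ) (g.mono (by linarith : θ ≤ 2 * θ))
    linarith [hlog_doub θ hθ]
  set t : ℕ → ℝ := fun k => 2 ^ k * θ
  have ht : ∀ k, 0 < t k := fun k => by positivity
  have ht_succ : ∀ k, t (k + 1) = 2 * t k := fun k => by simp only [t]; ring
  have ht_mono : ∀ k, t k ≤ t (k + 1) := fun k => by rw [ht_succ]; linarith [ht k]
  have hpiece : ∀ k, ∫ y in t k..t (k + 1), (g y)⁻¹ / y ∂g.measure ≤ Real.log D / θ * (1 / 2) ^ k :=
    fun k => by
      refine (g.integral_inv_div_le (ht k) (ht_mono k) (hpos _ (ht k))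
        (hcont.mono fun y hy => (ht k).trans_le hy.1)).trans ?_
      rw [ht_succ, div_pow, one_pow]
      calc (Real.log (g (2 * t k)) - Real.log (g (t k))) / t k ≤ Real.log D / t k := by
            gcongr; exact hlog_doub _ (ht k)
        _ = Real.log D / θ * (1 / 2 ^ k) := by simp only [t]; field_simp
  have hsum : ∑ k ∈ Finset.range m, ∫ y in t k..t (k + 1), (g y)⁻¹ / y ∂g.measure
      = ∫ y in θ..2 ^ m * θ, (g y)⁻¹ / y ∂g.measure := by
    rw [intervalIntegral.sum_integral_adjacent_intervals fun k _ =>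
      g.intervalIntegrable_inv_div (ht_mono k) (ht k) (hpos _ (ht k))]
    simp [t]
  rw [← hsum]
  calc ∑ k ∈ Finset.range m, ∫ y in t k..t (k + 1), (g y)⁻¹ / y ∂g.measure
      ≤ ∑ k ∈ Finset.range m, Real.log D / θ * (1 / 2) ^ k := Finset.sum_le_sum fun k _ => hpiece k
    _ ≤ Real.log D / θ * 2 := by
        rw [← Finset.mul_sum]; gcongr; exact sum_geometric_two_le m
    _ = 2 * Real.log D / θ := by ring

end StieltjesFunction

theorem stmt0_general (w : ℝ → ℝ) (D : ℝ)
    (hw_pos : ∀ y, 0 < y → 0 < w y)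
    (hw_cont : ContinuousOn w (Set.Ioi 0))
    (hw_doub : ∀ y, 0 < y → w y ≤ D * w (2 * y))
    (g : StieltjesFunction ℝ) (hg : ∀ y, 0 < y → g y = 1 / w y)
    (θ : ℝ) (hθ : θ ∈ Set.Ioc (0 : ℝ) 1) :
    ∫ y in Set.Ioc θ 1, w y / y ∂g.measure ≤ 2 * Real.log D / θ := by
  have hθ0 := hθ.1
  have hg_pos : ∀ y, 0 < y → 0 < g y := fun y hy => by rw [hg y hy]; exact one_div_pos.2 (hw_pos y hy)
  have hg_cont : ContinuousOn g (Ioi 0) :=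
    (continuousOn_const.div hw_cont fun y hy => (hw_pos y hy).ne').congr fun y hy => hg y hy
  have hg_doub : ∀ y, 0 < y → g (2 * y) ≤ D * g y := fun y hy => by
    rw [hg y hy, hg _ (by positivity), mul_one_div,
      div_le_div_iff₀ (hw_pos _ (by positivity)) (hw_pos y hy), one_mul]
    exact hw_doub y hy
  obtain ⟨m, hm⟩ := pow_unbounded_of_one_lt θ⁻¹ one_lt_two
  have h1m : 1 ≤ 2 ^ m * θ := by rw [inv_lt_iff_one_lt_mul₀ hθ0] at hm; linarith
  have hθm : θ ≤ 2 ^ m * θ := le_mul_of_one_le_left hθ0.le (one_le_pow₀ one_le_two)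
  have hint := g.intervalIntegrable_inv_div hθm hθ0 (hg_pos θ hθ0)
  calc ∫ y in Ioc θ 1, w y / y ∂g.measure = ∫ y in Ioc θ 1, (g y)⁻¹ / y ∂g.measure :=
        setIntegral_congr_fun measurableSet_Ioc fun y hy => by
          rw [hg y (hθ0.trans hy.1), one_div, inv_inv]
    _ ≤ ∫ y in Ioc θ (2 ^ m * θ), (g y)⁻¹ / y ∂g.measure :=
        setIntegral_mono_set hint.1 (ae_restrict_of_forall_mem measurableSet_Ioc fun y hy =>
            div_nonneg (inv_nonneg.2 (hg_pos y (hθ0.trans hy.1)).le) (hθ0.trans hy.1).le)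
          (Ioc_subset_Ioc_right h1m).eventuallyLE
    _ ≤ 2 * Real.log D / θ := by
        rw [← intervalIntegral.integral_of_le hθm]
        exact g.integral_inv_div_le_of_doubling hθ0 hg_pos hg_cont hg_doub m

/-- For a continuous decreasing doubling weight `w` (equal to `1` beyond `1`),
the Stieltjes integral `∫_θ^1 (w y / y) d(1/w)` is at most `2 log D / θ`. -/
theorem stmt0 (w : ℝ → ℝ) (D : ℝ) (hD : 0 < D)
    (hw_pos : ∀ y, 0 < y → 0 < w y)
    (hw_cont : ContinuousOn w (Set.Ioi 0))
    (hw_anti : AntitoneOn w (Set.Ioi 0))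
    (hw_one : ∀ y, 1 < y → w y = 1)
    (hw_doub : ∀ y, 0 < y → w y ≤ D * w (2 * y))
    (g : StieltjesFunction ℝ) (hg : ∀ y, 0 < y → g y = 1 / w y)
    (θ : ℝ) (hθ : θ ∈ Set.Ioc (0 : ℝ) 1) :
    ∫ y in Set.Ioc θ 1, w y / y ∂g.measure ≤ 2 * Real.log D / θ :=
  stmt0_general w D hw_pos hw_cont hw_doub g hg θ hθ
end

section
/- Let P_y(t) = y/(π(y² + t²)) be the Poisson kernel of the upper half-plane and φ : ℝ → ℝ a C¹ function supported in [0,1] with ‖φ‖_∞ ≤ 1 and ∫φ = 0. For j ∈ ℕ, let φ_{j,i}(t) = φ(2^j t − i), i = 0,…,2^j − 1, be the copies of φ on the dyadic intervals of rank j in (0,1]. Then there is an absolute constant C such that for all x ∈ ℝ and y > 0, ∑_{i=0}^{2^j−1} |(φ_{j,i} * P_y)(x)| ≤ C·2^{−j}/y. -/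
/-!
Since `∫ φ_{j,i} = 0`, one may subtract from `P_y(x - ·)` its value at the left endpoint of the
dyadic interval `I_{j,i}` carrying `φ_{j,i}`; on `I_{j,i}` the difference is at most
`∫_{I_{j,i}} |P_y'(x - ·)|`, so `|(φ_{j,i} * P_y)(x)| ≤ 2^{-j} ∫_{I_{j,i}} |P_y'(x - ·)|`.
The intervals are disjoint, so the sum is at most `2^{-j} ∫_ℝ |P_y'| ≤ 2^{-j} / y`, because
`|P_y'| ≤ P_y / y` and `∫ P_y = 1`. Thus `C = 1` works.
-/

open MeasureTheory Set

/-- The Poisson kernel of the upper half-plane, `P_y(t) = y / (π (y² + t²))`. -/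
noncomputable def poissonK (y t : ℝ) : ℝ := y / (Real.pi * (y ^ 2 + t ^ 2))

open Function

theorem abs_sub_le_integral_abs_deriv {g g' : ℝ → ℝ} {a b t : ℝ} (ht : t ∈ Icc a b)
    (hg : ∀ s ∈ Icc a b, HasDerivAt g (g' s) s) (hg' : IntervalIntegrable g' volume a b) :
    |g t - g a| ≤ ∫ s in a..b, |g' s| := by
  have hsub : uIcc a t ⊆ Icc a b := by
    rw [uIcc_of_le ht.1]; exact Icc_subset_Icc_right ht.2
  rw [← intervalIntegral.integral_eq_sub_of_hasDerivAt (fun s hs => hg s (hsub hs))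
    (hg'.mono_set (hsub.trans_eq (uIcc_of_le (ht.1.trans ht.2)).symm))]
  calc |∫ s in a..t, g' s| ≤ ∫ s in a..t, |g' s| :=
        intervalIntegral.abs_integral_le_integral_abs ht.1
    _ ≤ ∫ s in a..b, |g' s| :=
        intervalIntegral.integral_mono_interval le_rfl ht.1 ht.2
          (ae_of_all _ fun s => abs_nonneg _) hg'.abs

theorem abs_integral_mul_le_of_integral_eq_zero {ψ g g' : ℝ → ℝ} {a b K : ℝ} (hab : a ≤ b)
    (hψ : Integrable ψ) (hsupp : support ψ ⊆ Icc a b) (hbound : ∀ t, |ψ t| ≤ K)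
    (hmean : ∫ t, ψ t = 0) (hg : ∀ t ∈ Icc a b, HasDerivAt g (g' t) t)
    (hg' : IntervalIntegrable g' volume a b) :
    |∫ t, ψ t * g t| ≤ K * (b - a) * ∫ t in a..b, |g' t| := by
  have hψg : Integrable fun t => ψ t * g t :=
    (integrableOn_iff_integrable_of_support_subset
      ((support_mul_subset_left _ _).trans hsupp)).1
      (hψ.integrableOn.mul_continuousOn
        (fun t ht => (hg t ht).continuousAt.continuousWithinAt) isCompact_Icc)
  have hshift : ∫ t, ψ t * g t = ∫ t in Icc a b, ψ t * (g t - g a) := by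
    rw [setIntegral_eq_integral_of_forall_compl_eq_zero fun t ht => by
      rw [notMem_support.1 fun h => ht (hsupp h), zero_mul]]
    simp_rw [mul_sub]
    rw [integral_sub hψg (hψ.mul_const _), integral_mul_const, hmean, zero_mul, sub_zero]
  rw [hshift, ← Real.norm_eq_abs]
  calc ‖∫ t in Icc a b, ψ t * (g t - g a)‖
      ≤ (K * ∫ s in a..b, |g' s|) * (volume (Icc a b)).toReal := by
        refine norm_setIntegral_le_of_norm_le_const measure_Icc_lt_top fun t ht => ?_
        rw [Real.norm_eq_abs, abs_mul]
        exact mul_le_mul (hbound t) (abs_sub_le_integral_abs_deriv ht hg hg') (abs_nonneg _)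
          ((abs_nonneg _).trans (hbound t))
    _ = K * (b - a) * ∫ t in a..b, |g' t| := by
        rw [Real.volume_Icc, ENNReal.toReal_ofReal (sub_nonneg.2 hab)]; ring

theorem integral_comp_mul_sub (φ : ℝ → ℝ) (c d : ℝ) :
    ∫ t, φ (c * t - d) = |c⁻¹| * ∫ t, φ t := by
  rw [Measure.integral_comp_mul_left (fun u => φ (u - d)), integral_sub_right_eq_self,
    smul_eq_mul]

theorem support_comp_mul_sub_subset {φ : ℝ → ℝ} (hsupp : support φ ⊆ Icc 0 1) {c : ℝ}
    (hc : 0 < c) (d : ℝ) : support (fun t => φ (c * t - d)) ⊆ Icc (d / c) ((d + 1) / c) := by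
  intro t ht
  obtain ⟨h0, h1⟩ := hsupp ht
  rw [mem_Icc, div_le_iff₀ hc, le_div_iff₀ hc]
  constructor <;> linarith

theorem sum_abs_integral_dyadic_le {φ g g' : ℝ → ℝ} {K : ℝ} (hφ : Integrable φ)
    (hsupp : support φ ⊆ Icc 0 1) (hbound : ∀ t, |φ t| ≤ K) (hmean : ∫ t, φ t = 0)
    (hg : ∀ t ∈ Icc 0 1, HasDerivAt g (g' t) t) (hg' : IntervalIntegrable g' volume 0 1)
    (j : ℕ) :
    ∑ i ∈ Finset.range (2 ^ j), |∫ t, φ ((2 : ℝ) ^ j * t - i) * g t|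
      ≤ K * (2 : ℝ) ^ (-(j : ℤ)) * ∫ t in 0..1, |g' t| := by
  set c : ℝ := 2 ^ j with hc
  have hc0 : 0 < c := by positivity
  have hcinv : c⁻¹ = (2 : ℝ) ^ (-(j : ℤ)) := by rw [zpow_neg, zpow_natCast]
  have hend : ∀ i ∈ Finset.range (2 ^ j), Icc ((i : ℝ) / c) ((i + 1 : ℕ) / c) ⊆ Icc 0 1 := by
    intro i hi
    apply Icc_subset_Icc (by positivity)
    rw [div_le_one hc0, hc]
    exact_mod_cast Finset.mem_range.1 hi
  have hmono : ∀ i : ℕ, (i : ℝ) / c ≤ (i + 1 : ℕ) / c := fun i => by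
    gcongr; exact_mod_cast i.le_succ
  have hint : ∀ i ∈ Finset.range (2 ^ j),
      IntervalIntegrable g' volume ((i : ℝ) / c) ((i + 1 : ℕ) / c) := fun i hi =>
    hg'.mono_set (by rw [uIcc_of_le (hmono i), uIcc_of_le zero_le_one]; exact hend i hi)
  have hterm : ∀ i ∈ Finset.range (2 ^ j), |∫ t, φ (c * t - i) * g t|
      ≤ K * c⁻¹ * ∫ t in (i : ℝ) / c..(i + 1 : ℕ) / c, |g' t| := by
    intro i hi
    have hlen : ((i + 1 : ℕ) : ℝ) / c - i / c = c⁻¹ := by push_cast; field_simp; ring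
    rw [← hlen]
    exact abs_integral_mul_le_of_integral_eq_zero (hmono i)
      ((hφ.comp_sub_right _).comp_mul_left' hc0.ne')
      (by exact_mod_cast support_comp_mul_sub_subset hsupp hc0 i) (fun t => hbound _)
      (by rw [integral_comp_mul_sub, hmean, mul_zero]) (fun t ht => hg t (hend i hi ht))
      (hint i hi)
  calc ∑ i ∈ Finset.range (2 ^ j), |∫ t, φ (c * t - i) * g t|
      ≤ ∑ i ∈ Finset.range (2 ^ j), K * c⁻¹ * ∫ t in (i : ℝ) / c..(i + 1 : ℕ) / c, |g' t| :=
        Finset.sum_le_sum hterm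
    _ = K * c⁻¹ * ∫ t in (0 : ℕ) / c..(2 ^ j : ℕ) / c, |g' t| := by
        rw [← Finset.mul_sum, intervalIntegral.sum_integral_adjacent_intervals
          (a := fun i : ℕ => (i : ℝ) / c)]
        exact fun i hi => (hint i (Finset.mem_range.2 hi)).abs
    _ = K * (2 : ℝ) ^ (-(j : ℤ)) * ∫ t in 0..1, |g' t| := by
        rw [hcinv, hc]; push_cast; rw [zero_div, div_self (by positivity)]

theorem poissonK_nonneg {y : ℝ} (hy : 0 ≤ y) (t : ℝ) : 0 ≤ poissonK y t := by
  unfold poissonK; positivity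

theorem poissonK_eq_inv_one_add_sq {y : ℝ} (hy : y ≠ 0) (t : ℝ) :
    poissonK y t = (Real.pi * y)⁻¹ * (1 + (t / y) ^ 2)⁻¹ := by
  unfold poissonK
  field_simp

theorem integrable_poissonK {y : ℝ} (hy : y ≠ 0) : Integrable (poissonK y) := by
  simp_rw [funext (poissonK_eq_inv_one_add_sq hy)]
  exact (integrable_inv_one_add_sq.comp_div hy).const_mul _

theorem integral_poissonK {y : ℝ} (hy : 0 < y) : ∫ t, poissonK y t = 1 := by
  simp_rw [poissonK_eq_inv_one_add_sq hy.ne', integral_const_mul,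
    Measure.integral_comp_div (fun u : ℝ => (1 + u ^ 2)⁻¹) y, integral_univ_inv_one_add_sq,
    abs_of_pos hy, smul_eq_mul]
  field_simp

theorem hasDerivAt_poissonK {y : ℝ} (hy : y ≠ 0) (t : ℝ) :
    HasDerivAt (poissonK y) (-(2 * t / (y ^ 2 + t ^ 2)) * poissonK y t) t := by
  have h := (hasDerivAt_const t y).div
    (((hasDerivAt_pow 2 t).const_add (y ^ 2)).const_mul Real.pi)
    (mul_ne_zero Real.pi_ne_zero (by positivity))
  refine h.congr_deriv ?_
  unfold poissonK
  field_simp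
  ring

theorem continuous_poissonK {y : ℝ} (hy : y ≠ 0) : Continuous (poissonK y) :=
  continuous_iff_continuousAt.2 fun t => (hasDerivAt_poissonK hy t).continuousAt

theorem continuous_deriv_poissonK {y : ℝ} (hy : y ≠ 0) :
    Continuous fun t => -(2 * t / (y ^ 2 + t ^ 2)) * poissonK y t := by
  have hq : Continuous fun t : ℝ => 2 * t / (y ^ 2 + t ^ 2) :=
    by fun_prop (disch := intros; positivity)
  exact hq.neg.mul (continuous_poissonK hy)

theorem abs_two_mul_div_sq_add_sq_le {y : ℝ} (hy : 0 < y) (t : ℝ) :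
    |2 * t / (y ^ 2 + t ^ 2)| ≤ y⁻¹ := by
  rw [abs_div, abs_mul, abs_two, abs_of_pos (by positivity : 0 < y ^ 2 + t ^ 2),
    div_le_iff₀ (by positivity), inv_mul_eq_div, le_div_iff₀ hy]
  nlinarith [sq_nonneg (y - |t|), sq_abs t]

theorem integral_abs_deriv_poissonK_le {y a b : ℝ} (hy : 0 < y) (hab : a ≤ b) :
    ∫ t in a..b, |-(2 * t / (y ^ 2 + t ^ 2)) * poissonK y t| ≤ y⁻¹ := by
  calc ∫ t in a..b, |-(2 * t / (y ^ 2 + t ^ 2)) * poissonK y t|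
      ≤ ∫ t in a..b, y⁻¹ * poissonK y t := by
        refine intervalIntegral.integral_mono_on hab
          ((continuous_deriv_poissonK hy.ne').abs.intervalIntegrable a b)
          (((continuous_poissonK hy.ne').const_mul _).intervalIntegrable a b) fun t _ => ?_
        rw [abs_mul, abs_neg, abs_of_nonneg (poissonK_nonneg hy.le t)]
        exact mul_le_mul_of_nonneg_right (abs_two_mul_div_sq_add_sq_le hy t)
          (poissonK_nonneg hy.le t)
    _ ≤ ∫ t, y⁻¹ * poissonK y t := by
        rw [intervalIntegral.integral_of_le hab]
        exact setIntegral_le_integral ((integrable_poissonK hy.ne').const_mul _)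
          (ae_of_all _ fun t => mul_nonneg (inv_nonneg.2 hy.le) (poissonK_nonneg hy.le t))
    _ = y⁻¹ := by rw [integral_const_mul, integral_poissonK hy, mul_one]

/-- for `φ ∈ C¹` supported in `[0,1]` with `‖φ‖_∞ ≤ 1` and `∫ φ = 0`, there
is an absolute constant `C` such that
`∑_{i<2^j} |(φ_{j,i} * P_y)(x)| ≤ C 2^{−j}/y` for all `j`, `x` and `y > 0`,
where `φ_{j,i}(t) = φ(2^j t − i)`. -/
theorem stmt9 :
    ∃ C : ℝ, 0 < C ∧
      ∀ (φ : ℝ → ℝ), ContDiff ℝ 1 φ → Function.support φ ⊆ Set.Icc 0 1 →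
        (∀ t, |φ t| ≤ 1) → (∫ t : ℝ, φ t) = 0 →
        ∀ (j : ℕ) (x y : ℝ), 0 < y →
          ∑ i ∈ Finset.range (2 ^ j),
              |∫ t : ℝ, φ ((2 : ℝ) ^ j * t - i) * poissonK y (x - t)|
            ≤ C * (2 : ℝ) ^ (-(j : ℤ)) / y := by
  refine ⟨1, one_pos, fun φ hφ hsupp hbound hmean j x y hy => ?_⟩
  set P' : ℝ → ℝ := fun s => -(2 * s / (y ^ 2 + s ^ 2)) * poissonK y s
  have hg (t : ℝ) : HasDerivAt (fun t => poissonK y (x - t)) (P' (x - t) * -1) t :=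
    (hasDerivAt_poissonK hy.ne' (x - t)).comp t ((hasDerivAt_id t).const_sub x)
  have hφint : Integrable φ := hφ.continuous.integrable_of_hasCompactSupport
    (HasCompactSupport.intro isCompact_Icc fun t ht => notMem_support.1 fun h => ht (hsupp h))
  calc ∑ i ∈ Finset.range (2 ^ j), |∫ t, φ ((2 : ℝ) ^ j * t - i) * poissonK y (x - t)|
      ≤ 1 * (2 : ℝ) ^ (-(j : ℤ)) * ∫ t in 0..1, |P' (x - t) * -1| :=
        sum_abs_integral_dyadic_le hφint hsupp hbound hmean (fun t _ => hg t)
          ((((continuous_deriv_poissonK hy.ne').comp (continuous_sub_left x)).mul_const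
            _).intervalIntegrable _ _) j
    _ ≤ 1 * (2 : ℝ) ^ (-(j : ℤ)) * y⁻¹ := by
        gcongr
        simp only [mul_neg_one, abs_neg]
        rw [intervalIntegral.integral_comp_sub_left (fun s => |P' s|)]
        exact integral_abs_deriv_poissonK_le hy (by linarith)
    _ = 1 * (2 : ℝ) ^ (-(j : ℤ)) / y := by rw [div_eq_mul_inv]
end
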